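/- arXiv:1908.06329 — 2 statements merged into one kernel-verified Lean document; each statement's English description precedes it below -/
import Mathlib

section
/- With F, λ, r, η as above, and c² = Var(G) (the variance of the random variable with distribution F, which has mean 1), define κ(h) = (∫_{λh}^∞ ∫_t^∞ (1 − F(x)) dx dt)/(1 − F(λh)) − ((c² + 1)/2)·(∫_{λh}^∞ (1 − F(x)) dx)/(1 − F(λh)). Then κ(0) = 0 and for all h ≥ 0, the right derivative satisfies κ̇(h) − r(h)·κ(h) = λ·(η(h) + (c² − 1)/2). -/
open MeasureTheory Set Filter Topology

/-!
Write `S = 1 - F`, `A(u) = ∫_u^∞ S` and `B(u) = ∫_u^∞ A`. By the fundamental theorem of calculus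
for tail integrals, `A` and `B` have right derivatives `-S` and `-A`, so `κ(h) = (B - a A)/S`
evaluated at `λh` (with `a = (c² + 1)/2`) is right-differentiable by the quotient rule, and the
identity `κ̇ - rκ = λ(η + (c² - 1)/2)` is then a rearrangement of
`κ̇ = λ((-A + a S)/S - S'(B - a A)/S²)`.
At `h = 0` one has `S = 1`, `A(0) = 1` and `B(0) = a`, so `κ(0) = 0`.
-/

theorem hasDerivWithinAt_integral_Ioi {f : ℝ → ℝ} {u : ℝ} (hf : IntegrableOn f (Ioi u))
    (hcont : ContinuousWithinAt f (Ici u) u) :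
    HasDerivWithinAt (fun v => ∫ x in Ioi v, f x) (-f u) (Ici u) u := by
  have hmeas : StronglyMeasurableAtFilter f (𝓝[>] u) :=
    ⟨Ioi u, self_mem_nhdsWithin, hf.aestronglyMeasurable⟩
  have hftc : HasDerivWithinAt (fun v => (∫ x in Ioi u, f x) - ∫ x in u..v, f x) (-f u)
      (Ici u) u := by
    simpa using (intervalIntegral.integral_hasDerivWithinAt_right (a := u)
      IntervalIntegrable.refl hmeas (hcont.mono Ioi_subset_Ici_self)).const_sub _
  have htail : ∀ v, u ≤ v → ∫ x in Ioi v, f x = (∫ x in Ioi u, f x) - ∫ x in u..v, f x :=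
    fun v hv => by rw [← intervalIntegral.integral_Ioi_sub_Ioi hf hv, sub_sub_cancel]
  exact hftc.congr htail (htail u le_rfl)

theorem HasDerivWithinAt.comp_const_mul_Ici {f : ℝ → ℝ} {f' c h : ℝ} (hc : 0 ≤ c)
    (hf : HasDerivWithinAt f f' (Ici (c * h)) (c * h)) :
    HasDerivWithinAt (fun v => f (c * v)) (f' * c) (Ici h) h :=
  hf.comp h ((hasDerivAt_id h).const_mul c |>.hasDerivWithinAt.congr_deriv (mul_one c))
    fun _ hv => mul_le_mul_of_nonneg_left hv hc

theorem stmt1_general (F F' : ℝ → ℝ) (lam csq : ℝ) (hlam : 0 < lam)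
    (hF0 : F 0 = 0)
    (hFlt : ∀ t ≥ (0:ℝ), F t < 1)
    (hFderiv : ∀ t ≥ (0:ℝ), HasDerivWithinAt F (F' t) (Set.Ici t) t)
    (hint : IntegrableOn (fun y => 1 - F y) (Set.Ici 0))
    (hint2 : IntegrableOn (fun t => ∫ x in Set.Ioi t, (1 - F x)) (Set.Ici 0))
    (hmean : ∫ y in Set.Ioi (0:ℝ), (1 - F y) = 1)
    (hcsq : csq = 2 * (∫ t in Set.Ioi (0:ℝ), ∫ x in Set.Ioi t, (1 - F x)) - 1)
    (r η κ : ℝ → ℝ)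
    (hr : ∀ h, r h = lam * F' (lam * h) / (1 - F (lam * h)))
    (hη : ∀ h, η h = 1 - (∫ y in Set.Ioi (lam * h), (1 - F y)) / (1 - F (lam * h)))
    (hκ : ∀ h, κ h =
        (∫ t in Set.Ioi (lam * h), ∫ x in Set.Ioi t, (1 - F x)) / (1 - F (lam * h))
          - ((csq + 1) / 2) * ((∫ x in Set.Ioi (lam * h), (1 - F x)) / (1 - F (lam * h)))) :
    κ 0 = 0 ∧ ∀ h ≥ (0:ℝ),
      HasDerivWithinAt κ (r h * κ h + lam * (η h + (csq - 1) / 2)) (Set.Ici h) h := by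
  refine ⟨by rw [hκ 0, mul_zero, hF0, hmean, hcsq]; ring, fun h hh => ?_⟩
  have hu : 0 ≤ lam * h := by positivity
  have hIoi : Ioi (lam * h) ⊆ Ici 0 := fun _ hx => hu.trans hx.le
  have hS0 : 1 - F (lam * h) ≠ 0 := by linarith [hFlt _ hu]
  have hS := (hFderiv _ hu).const_sub 1
  have hA := hasDerivWithinAt_integral_Ioi (hint.mono_set hIoi) hS.continuousWithinAt
  have hB := hasDerivWithinAt_integral_Ioi (hint2.mono_set hIoi) hA.continuousWithinAt
  have hSh := hS.comp_const_mul_Ici hlam.le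
  have hκ' := ((hB.comp_const_mul_Ici hlam.le).div hSh hS0).sub
    (((hA.comp_const_mul_Ici hlam.le).div hSh hS0).const_mul ((csq + 1) / 2))
  refine (hκ'.congr (fun v _ => hκ v) (hκ h)).congr_deriv ?_
  rw [hr, hη, hκ]
  field_simp
  ring

/-- identity for the right derivative of the function κ built from the
second-order residual life and the mean residual life of F:
κ(0) = 0 and κ̇(h) − r(h)·κ(h) = λ·(η(h) + (c² − 1)/2). -/
theorem stmt1 (F F' : ℝ → ℝ) (lam csq : ℝ) (hlam : 0 < lam)
    (hmono : Monotone F) (hF0 : F 0 = 0)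
    (hFlt : ∀ t ≥ (0:ℝ), F t < 1)
    (hFderiv : ∀ t ≥ (0:ℝ), HasDerivWithinAt F (F' t) (Set.Ici t) t)
    (hint : IntegrableOn (fun y => 1 - F y) (Set.Ici 0))
    (hint2 : IntegrableOn (fun t => ∫ x in Set.Ioi t, (1 - F x)) (Set.Ici 0))
    (hmean : ∫ y in Set.Ioi (0:ℝ), (1 - F y) = 1)
    (hcsq : csq = 2 * (∫ t in Set.Ioi (0:ℝ), ∫ x in Set.Ioi t, (1 - F x)) - 1)
    (r η κ : ℝ → ℝ)
    (hr : ∀ h, r h = lam * F' (lam * h) / (1 - F (lam * h)))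
    (hη : ∀ h, η h = 1 - (∫ y in Set.Ioi (lam * h), (1 - F y)) / (1 - F (lam * h)))
    (hκ : ∀ h, κ h =
        (∫ t in Set.Ioi (lam * h), ∫ x in Set.Ioi t, (1 - F x)) / (1 - F (lam * h))
          - ((csq + 1) / 2) * ((∫ x in Set.Ioi (lam * h), (1 - F x)) / (1 - F (lam * h)))) :
    κ 0 = 0 ∧ ∀ h ≥ (0:ℝ),
      HasDerivWithinAt κ (r h * κ h + lam * (η h + (csq - 1) / 2)) (Set.Ici h) h :=
  stmt1_general F F' lam csq hlam hF0 hFlt hFderiv hint hint2 hmean hcsq r η κ hr hη hκ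
end

section
/- (Continuity of the controlled integral map) Let h : ℝ^d × ℝ^d → ℝ^d be Lipschitz continuous in each coordinate (hence globally Lipschitz with constant K in the first argument, uniformly in the second). For y ∈ D([0,T], ℝ^d) (càdlàg) and u : [0,T] → ℝ^d bounded measurable, there exists a unique x ∈ D([0,T], ℝ^d) satisfying x(t) = y(t) + ∫_0^t h(x(s), u(s)) ds for all t ∈ [0,T]. Moreover, if x₁, x₂ correspond to data (y₁,u), (y₂,u) then sup_{t≤T}|x₁(t) − x₂(t)| ≤ e^{KT}·sup_{t≤T}|y₁(t) − y₂(t)|. -/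
/-!
Work in `EuclideanSpace ℝ (Fin d)`, where the hypotheses make `g s x = h x (u s)` a `K`-Lipschitz
function of `x`. A càdlàg function on `[0, T]` is bounded and a.e. strongly measurable, so the
integrand `s ↦ g s (x s)` is integrable along every càdlàg `x`.

Existence: as `y` is only càdlàg, the solution is sought as `y + z` with `z` a fixed point of the
Picard map `z ↦ (t ↦ ∫₀ᵗ g s (y s + z s) ds)` on `C([0, T], ℝ^d)`. Its `n`-th iterate is
`(K T)ⁿ / n!`-Lipschitz, hence a contraction for large `n`.

Stability, and with it uniqueness: two solutions satisfy
`‖x₁ t - x₂ t‖ ≤ sup ‖y₁ - y₂‖ + K ∫₀ᵗ ‖x₁ - x₂‖`, and Grönwall's inequality, proved by iterating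
the same Volterra estimate, yields the factor `exp (K t)`.
-/

open MeasureTheory Filter Topology

/-- A function is càdlàg on [0,T]: right-continuous on [0,T) and with left limits on
(0,T]. -/
def CadlagOn {E : Type*} [TopologicalSpace E] (f : ℝ → E) (T : ℝ) : Prop :=
  (∀ t ∈ Set.Ico (0:ℝ) T, ContinuousWithinAt f (Set.Ici t) t) ∧
  (∀ t ∈ Set.Ioc (0:ℝ) T, ∃ l : E, Filter.Tendsto f (nhdsWithin t (Set.Iio t)) (𝓝 l))

open Set Bornology Real
open scoped Nat NNReal

section Cadlag

variable {E F : Type*} {T : ℝ}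

theorem Continuous.cadlagOn [TopologicalSpace E] {f : ℝ → E} (hf : Continuous f) :
    CadlagOn f T :=
  ⟨fun _ _ => hf.continuousWithinAt,
    fun t _ => ⟨f t, hf.continuousAt.tendsto.mono_left nhdsWithin_le_nhds⟩⟩

theorem Continuous.comp_cadlagOn [TopologicalSpace E] [TopologicalSpace F] {g : E → F}
    {f : ℝ → E} (hg : Continuous g) (hf : CadlagOn f T) : CadlagOn (g ∘ f) T := by
  refine ⟨fun t ht => hg.continuousAt.comp_continuousWithinAt (hf.1 t ht), fun t ht => ?_⟩
  obtain ⟨l, hl⟩ := hf.2 t ht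
  exact ⟨g l, (hg.tendsto l).comp hl⟩

namespace CadlagOn

theorem add [TopologicalSpace E] [Add E] [ContinuousAdd E] {f₁ f₂ : ℝ → E}
    (hf₁ : CadlagOn f₁ T) (hf₂ : CadlagOn f₂ T) : CadlagOn (f₁ + f₂) T := by
  refine ⟨fun t ht => (hf₁.1 t ht).add (hf₂.1 t ht), fun t ht => ?_⟩
  obtain ⟨l₁, h₁⟩ := hf₁.2 t ht
  obtain ⟨l₂, h₂⟩ := hf₂.2 t ht
  exact ⟨l₁ + l₂, h₁.add h₂⟩

theorem isBounded_image [PseudoMetricSpace E] {f : ℝ → E} (hf : CadlagOn f T) :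
    IsBounded (f '' Icc 0 T) := by
  refine isCompact_Icc.induction_on (p := fun s => IsBounded (f '' s)) (by simp)
    (fun s t hst ht => ht.subset (image_mono hst))
    (fun s t hs ht => by simpa only [image_union] using hs.union ht) fun t ht => ?_
  have hright : Tendsto f (𝓝[Icc 0 T ∩ Ici t] t) (𝓝 (f t)) := by
    rcases ht.2.lt_or_eq with htT | rfl
    · exact (hf.1 t ⟨ht.1, htT⟩).mono inter_subset_right
    · exact continuousWithinAt_singleton.mono fun s hs => le_antisymm hs.1.2 hs.2
  obtain ⟨l, hleft⟩ : ∃ l, Tendsto f (𝓝[Icc 0 T ∩ Iio t] t) (𝓝 l) := by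
    rcases ht.1.lt_or_eq with h0t | rfl
    · obtain ⟨l, hl⟩ := hf.2 t ⟨h0t, ht.2⟩
      exact ⟨l, hl.mono_left (nhdsWithin_mono _ inter_subset_right)⟩
    · refine ⟨f 0, ?_⟩
      rw [show Icc 0 T ∩ Iio (0:ℝ) = ∅ from
        eq_empty_of_forall_notMem fun s hs => hs.1.1.not_gt hs.2, nhdsWithin_empty]
      exact tendsto_bot
  have : Disjoint (map f (𝓝[Icc 0 T] t)) (cobounded E) := by
    rw [← inter_union_compl (Icc 0 T) (Ici t), compl_Ici, nhdsWithin_union, map_sup,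
      disjoint_sup_left]
    exact ⟨(Metric.disjoint_nhds_cobounded _).mono_left hright,
      (Metric.disjoint_nhds_cobounded _).mono_left hleft⟩
  obtain ⟨s, hs, hsb⟩ := disjoint_cobounded_iff.1 this
  exact ⟨f ⁻¹' s, hs, hsb.subset (image_preimage_subset f s)⟩

theorem exists_norm_le [SeminormedAddCommGroup E] {f : ℝ → E} (hf : CadlagOn f T) :
    ∃ C, ∀ t ∈ Icc 0 T, ‖f t‖ ≤ C := by
  obtain ⟨C, hC⟩ := isBounded_iff_forall_norm_le.1 hf.isBounded_image
  exact ⟨C, fun t ht => hC _ (mem_image_of_mem f ht)⟩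

theorem aestronglyMeasurable [TopologicalSpace E] [TopologicalSpace.PseudoMetrizableSpace E]
    {f : ℝ → E} (hf : CadlagOn f T) : AEStronglyMeasurable f (volume.restrict (Icc 0 T)) := by
  rw [← Measure.restrict_congr_set Ico_ae_eq_Icc]
  refine aestronglyMeasurable_of_tendsto_ae atTop (f := fun (n : ℕ) (s : ℝ) => f (⌈s * n⌉₊ / n))
    (fun n => ?_) (ae_restrict_of_forall_mem measurableSet_Ico fun s hs => ?_)
  · exact (StronglyMeasurable.of_discrete.comp_measurable (f := fun k : ℕ => f (k / n))
      (measurable_id.mul_const _).nat_ceil).aestronglyMeasurable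
  · refine (hf.1 s hs).tendsto.comp (tendsto_nhdsWithin_iff.2
      ⟨(tendsto_nat_ceil_mul_div_atTop hs.1).comp tendsto_natCast_atTop_atTop, ?_⟩)
    filter_upwards [eventually_gt_atTop 0] with n hn
    exact (le_div_iff₀ (Nat.cast_pos.2 hn : (0:ℝ) < n)).2 (Nat.le_ceil _)

theorem integrableOn [NormedAddCommGroup E] {f : ℝ → E} (hf : CadlagOn f T) :
    IntegrableOn f (Icc 0 T) := by
  obtain ⟨C, hC⟩ := hf.exists_norm_le
  exact .of_bound measure_Icc_lt_top hf.aestronglyMeasurable C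
    (ae_restrict_of_forall_mem measurableSet_Icc hC)

theorem integrableOn_comp_lipschitzWith₂ {G : Type*} [NormedAddCommGroup E]
    [NormedAddCommGroup F] [NormedAddCommGroup G] {H : E → F → G} {K L : ℝ≥0}
    (hH₁ : ∀ w, LipschitzWith K (H · w)) (hH₂ : ∀ a, LipschitzWith L (H a)) {u : ℝ → F}
    (hu : AEStronglyMeasurable u (volume.restrict (Icc 0 T))) {Cu : ℝ}
    (hCu : ∀ s ∈ Icc 0 T, ‖u s‖ ≤ Cu) {x : ℝ → E} (hx : CadlagOn x T) :
    IntegrableOn (fun s => H (x s) (u s)) (Icc 0 T) := by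
  obtain ⟨Cx, hCx⟩ := hx.exists_norm_le
  have hH : Continuous (Function.uncurry H) :=
    continuous_prod_of_continuous_lipschitzWith' _ L hH₂ fun w => (hH₁ w).continuous
  refine .of_bound measure_Icc_lt_top
    (hH.comp_aestronglyMeasurable (hx.aestronglyMeasurable.prodMk hu))
    (‖H 0 0‖ + K * Cx + L * Cu) (ae_restrict_of_forall_mem measurableSet_Icc fun s hs => ?_)
  have hx₀ : ‖H (x s) (u s) - H 0 (u s)‖ ≤ K * Cx := ((hH₁ (u s)).norm_sub_le (x s) 0).trans
    (by rw [sub_zero]; exact mul_le_mul_of_nonneg_left (hCx s hs) K.coe_nonneg)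
  have hu₀ : ‖H 0 (u s) - H 0 0‖ ≤ L * Cu := ((hH₂ 0).norm_sub_le (u s) 0).trans
    (by rw [sub_zero]; exact mul_le_mul_of_nonneg_left (hCu s hs) L.coe_nonneg)
  linarith [norm_le_norm_add_norm_sub' (H (x s) (u s)) (H 0 0),
    norm_sub_le_norm_sub_add_norm_sub (H (x s) (u s)) (H 0 (u s)) (H 0 0)]

end CadlagOn

end Cadlag

theorem MeasureTheory.IntegrableOn.intervalIntegrable_of_mem_Icc {E : Type*} [NormedAddCommGroup E]
    {f : ℝ → E} {a b t : ℝ} (hf : IntegrableOn f (Icc a b)) (ht : t ∈ Icc a b) :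
    IntervalIntegrable f volume a t :=
  (intervalIntegrable_iff_integrableOn_Icc_of_le ht.1).2 (hf.mono_set (Icc_subset_Icc_right ht.2))

theorem mul_integral_pow_div_factorial (K t : ℝ) (n : ℕ) :
    K * ∫ s in (0:ℝ)..t, (K * s) ^ n / n ! = (K * t) ^ (n + 1) / (n + 1)! := by
  simp_rw [mul_pow, mul_div_right_comm]
  rw [intervalIntegral.integral_const_mul, integral_pow, Nat.factorial_succ]
  push_cast
  field_simp
  ring

theorem le_mul_pow_div_factorial_of_le_mul_integral {f : ℕ → ℝ → ℝ} {K C T : ℝ} (hK : 0 ≤ K)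
    (hf : ∀ n, IntegrableOn (f n) (Icc 0 T)) (h₀ : ∀ t ∈ Icc 0 T, f 0 t ≤ C)
    (hsucc : ∀ n, ∀ t ∈ Icc 0 T, f (n + 1) t ≤ K * ∫ s in (0:ℝ)..t, f n s) :
    ∀ n, ∀ t ∈ Icc 0 T, f n t ≤ C * ((K * t) ^ n / n !) := by
  intro n
  induction n with
  | zero => simpa using h₀
  | succ n ih =>
    intro t ht
    calc f (n + 1) t ≤ K * ∫ s in (0:ℝ)..t, f n s := hsucc n t ht
      _ ≤ K * ∫ s in (0:ℝ)..t, C * ((K * s) ^ n / n !) := by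
        gcongr
        refine intervalIntegral.integral_mono_on ht.1 ((hf n).intervalIntegrable_of_mem_Icc ht)
          (Continuous.intervalIntegrable (by fun_prop) _ _) fun s hs => ih s ⟨hs.1, hs.2.trans ht.2⟩
      _ = C * ((K * t) ^ (n + 1) / (n + 1)!) := by
        rw [intervalIntegral.integral_const_mul, mul_left_comm, mul_integral_pow_div_factorial]

theorem add_mul_integral_mul_exp (δ K t : ℝ) :
    δ + K * ∫ s in (0:ℝ)..t, δ * exp (K * s) = δ * exp (K * t) := by
  have hderiv : ∀ s, HasDerivAt (fun s => δ * exp (K * s)) (K * (δ * exp (K * s))) s := fun s => by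
    simpa [mul_comm, mul_left_comm] using ((hasDerivAt_id s).const_mul K).exp.const_mul δ
  rw [← intervalIntegral.integral_const_mul,
    intervalIntegral.integral_eq_sub_of_hasDerivAt (fun s _ => hderiv s)
      (Continuous.intervalIntegrable (by fun_prop) _ _)]
  simp

theorem le_mul_exp_of_le_add_mul_integral {f : ℝ → ℝ} {δ K C T : ℝ} (hδ : 0 ≤ δ) (hK : 0 ≤ K)
    (hf : IntegrableOn f (Icc 0 T)) (hC : ∀ t ∈ Icc 0 T, f t ≤ C)
    (h : ∀ t ∈ Icc 0 T, f t ≤ δ + K * ∫ s in (0:ℝ)..t, f s) :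
    ∀ t ∈ Icc 0 T, f t ≤ δ * exp (K * t) := by
  -- `δ exp (K t)` solves the equation with equality, so `ψ` satisfies `ψ t ≤ K ∫₀ᵗ ψ` and hence
  -- `ψ t ≤ C (K t)ⁿ / n!` for every `n`.
  set ψ : ℝ → ℝ := fun t => f t - δ * exp (K * t)
  have hexp : Continuous fun s => δ * exp (K * s) := by fun_prop
  have hψ := le_mul_pow_div_factorial_of_le_mul_integral (f := fun _ => ψ) hK
    (fun _ => hf.sub hexp.integrableOn_Icc)
    (fun t ht => (sub_le_self _ (by positivity)).trans (hC t ht)) fun _ t ht => by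
      rw [intervalIntegral.integral_sub (hf.intervalIntegrable_of_mem_Icc ht)
        (hexp.intervalIntegrable _ _), mul_sub]
      linarith [h t ht, add_mul_integral_mul_exp δ K t]
  intro t ht
  have hlim : Tendsto (fun n : ℕ => C * ((K * t) ^ n / n !)) atTop (𝓝 0) := by
    simpa using (FloorSemiring.tendsto_pow_div_factorial_atTop (K * t)).const_mul C
  linarith [ge_of_tendsto' hlim fun n => hψ n t ht]

theorem exists_isFixedPt_of_dist_iterate_le {X : Type*} [MetricSpace X] [CompleteSpace X]
    [Nonempty X] {Φ : X → X} {c : ℕ → ℝ} (hΦ : ∀ n a b, dist (Φ^[n] a) (Φ^[n] b) ≤ c n * dist a b)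
    (hc : Tendsto c atTop (𝓝 0)) : ∃ a, Function.IsFixedPt Φ a := by
  obtain ⟨n, hn⟩ := (hc.eventually (gt_mem_nhds one_pos)).exists
  have hcontr : ContractingWith (c n).toNNReal Φ^[n] :=
    ⟨Real.toNNReal_lt_one.2 hn, LipschitzWith.of_dist_le' (hΦ n)⟩
  exact ⟨_, hcontr.isFixedPt_fixedPoint_iterate⟩

theorem dist_iterate_le_of_dist_le_mul_integral {X : Type*} [PseudoMetricSpace X] {T : ℝ}
    {K : ℝ≥0} (hT : 0 ≤ T) {Φ : C(Icc 0 T, X) → C(Icc 0 T, X)}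
    (hΦ : ∀ z₁ z₂ t, dist (Φ z₁ t) (Φ z₂ t) ≤
      K * ∫ s in (0:ℝ)..t, dist (IccExtend hT z₁ s) (IccExtend hT z₂ s))
    (n : ℕ) (z₁ z₂ : C(Icc 0 T, X)) :
    dist (Φ^[n] z₁) (Φ^[n] z₂) ≤ (K * T) ^ n / n ! * dist z₁ z₂ := by
  have hpos : 0 ≤ (K * T) ^ n / n ! * dist z₁ z₂ := by positivity
  have key := le_mul_pow_div_factorial_of_le_mul_integral K.coe_nonneg (C := dist z₁ z₂)
    (f := fun n s => dist (IccExtend hT (Φ^[n] z₁) s) (IccExtend hT (Φ^[n] z₂) s))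
    (fun n => (Continuous.dist (by fun_prop) (by fun_prop)).integrableOn_Icc)
    (fun t ht => by simpa [IccExtend_of_mem hT _ ht] using ContinuousMap.dist_apply_le_dist _)
    (fun n t ht => by
      rw [IccExtend_of_mem hT _ ht, IccExtend_of_mem hT _ ht, Function.iterate_succ_apply',
        Function.iterate_succ_apply']
      exact hΦ _ _ ⟨t, ht⟩) n
  refine (ContinuousMap.dist_le hpos).2 fun t => ?_
  obtain ⟨ht₀, htT⟩ := t.2
  calc dist (Φ^[n] z₁ t) (Φ^[n] z₂ t) ≤ dist z₁ z₂ * ((K * t) ^ n / n !) := by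
        simpa only [IccExtend_val] using key t t.2
    _ ≤ (K * T) ^ n / n ! * dist z₁ z₂ := by rw [mul_comm]; gcongr

section Volterra

variable {E : Type*} [NormedAddCommGroup E] [NormedSpace ℝ E]

def IsIntegralSolution (g : ℝ → E → E) (y : ℝ → E) (T : ℝ) (x : ℝ → E) : Prop :=
  ∀ t ∈ Icc 0 T, x t = y t + ∫ s in (0:ℝ)..t, g s (x s)

variable {T : ℝ} {K : ℝ≥0} {g : ℝ → E → E}

theorem norm_integral_sub_integral_le (hg : ∀ s, LipschitzWith K (g s))
    {x₁ x₂ : ℝ → E} {t : ℝ} (ht : 0 ≤ t) (h₁ : IntervalIntegrable (fun s => g s (x₁ s)) volume 0 t)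
    (h₂ : IntervalIntegrable (fun s => g s (x₂ s)) volume 0 t)
    (hx : IntervalIntegrable (fun s => ‖x₁ s - x₂ s‖) volume 0 t) :
    ‖(∫ s in (0:ℝ)..t, g s (x₁ s)) - ∫ s in (0:ℝ)..t, g s (x₂ s)‖ ≤
      K * ∫ s in (0:ℝ)..t, ‖x₁ s - x₂ s‖ := by
  rw [← intervalIntegral.integral_sub h₁ h₂, ← intervalIntegral.integral_const_mul]
  refine (intervalIntegral.norm_integral_le_integral_norm ht).trans
    (intervalIntegral.integral_mono_on ht (h₁.sub h₂).norm (hx.const_mul _) fun s _ => ?_)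
  simpa only [dist_eq_norm] using (hg s).dist_le_mul (x₁ s) (x₂ s)

namespace IsIntegralSolution

theorem dist_le (hg : ∀ s, LipschitzWith K (g s)) {y₁ y₂ x₁ x₂ : ℝ → E}
    (h₁ : IsIntegralSolution g y₁ T x₁) (h₂ : IsIntegralSolution g y₂ T x₂)
    (hx₁ : CadlagOn x₁ T) (hx₂ : CadlagOn x₂ T)
    (hg₁ : IntegrableOn (fun s => g s (x₁ s)) (Icc 0 T))
    (hg₂ : IntegrableOn (fun s => g s (x₂ s)) (Icc 0 T))
    {M : ℝ} (hM : ∀ t ∈ Icc 0 T, dist (y₁ t) (y₂ t) ≤ M) :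
    ∀ t ∈ Icc 0 T, dist (x₁ t) (x₂ t) ≤ M * exp (K * t) := by
  simp only [dist_eq_norm] at hM ⊢
  intro t ht
  have hM₀ : 0 ≤ M := (norm_nonneg _).trans (hM 0 ⟨le_rfl, ht.1.trans ht.2⟩)
  have hdiff : IntegrableOn (fun s => ‖x₁ s - x₂ s‖) (Icc 0 T) :=
    (hx₁.integrableOn.sub hx₂.integrableOn).norm
  obtain ⟨C₁, hC₁⟩ := hx₁.exists_norm_le
  obtain ⟨C₂, hC₂⟩ := hx₂.exists_norm_le
  refine le_mul_exp_of_le_add_mul_integral hM₀ K.coe_nonneg hdiff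
    (fun s hs => (norm_sub_le _ _).trans (add_le_add (hC₁ s hs) (hC₂ s hs))) (fun s hs => ?_) t ht
  calc ‖x₁ s - x₂ s‖
      = ‖(y₁ s - y₂ s) + ((∫ r in (0:ℝ)..s, g r (x₁ r)) - ∫ r in (0:ℝ)..s, g r (x₂ r))‖ := by
        rw [h₁ s hs, h₂ s hs]; abel_nf
    _ ≤ M + K * ∫ r in (0:ℝ)..s, ‖x₁ r - x₂ r‖ :=
      (norm_add_le _ _).trans (add_le_add (hM s hs) (norm_integral_sub_integral_le hg hs.1
        (hg₁.intervalIntegrable_of_mem_Icc hs) (hg₂.intervalIntegrable_of_mem_Icc hs)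
        (hdiff.intervalIntegrable_of_mem_Icc hs)))

theorem eqOn (hg : ∀ s, LipschitzWith K (g s)) {y x₁ x₂ : ℝ → E}
    (h₁ : IsIntegralSolution g y T x₁) (h₂ : IsIntegralSolution g y T x₂)
    (hx₁ : CadlagOn x₁ T) (hx₂ : CadlagOn x₂ T)
    (hg₁ : IntegrableOn (fun s => g s (x₁ s)) (Icc 0 T))
    (hg₂ : IntegrableOn (fun s => g s (x₂ s)) (Icc 0 T)) :
    EqOn x₁ x₂ (Icc 0 T) := fun t ht =>
  dist_le_zero.1 (by simpa using h₁.dist_le hg h₂ hx₁ hx₂ hg₁ hg₂ (M := 0) (by simp) t ht)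

end IsIntegralSolution

theorem exists_cadlagOn_isIntegralSolution [CompleteSpace E] (hT : 0 ≤ T)
    (hg : ∀ s, LipschitzWith K (g s))
    (hgx : ∀ x, CadlagOn x T → IntegrableOn (fun s => g s (x s)) (Icc 0 T))
    {y : ℝ → E} (hy : CadlagOn y T) :
    ∃ x, CadlagOn x T ∧ IsIntegralSolution g y T x := by
  have hcadlag (z : C(Icc 0 T, E)) : CadlagOn (y + IccExtend hT z) T :=
    hy.add (continuous_IccExtend_iff.2 z.continuous).cadlagOn
  have hint (z : C(Icc 0 T, E)) := hgx _ (hcadlag z)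
  let Φ (z : C(Icc 0 T, E)) : C(Icc 0 T, E) :=
    ⟨fun t => ∫ s in (0:ℝ)..t, g s (y s + IccExtend hT z s),
      ((intervalIntegral.continuousOn_primitive_interval (by rw [uIcc_of_le hT]; exact hint z)).mono
        (uIcc_of_le hT).ge).domRestrict⟩
  have hΦ (z₁ z₂ : C(Icc 0 T, E)) (t : Icc 0 T) : dist (Φ z₁ t) (Φ z₂ t) ≤
      K * ∫ s in (0:ℝ)..t, dist (IccExtend hT z₁ s) (IccExtend hT z₂ s) := by
    rw [dist_eq_norm]
    refine (norm_integral_sub_integral_le hg t.2.1 ((hint z₁).intervalIntegrable_of_mem_Icc t.2)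
      ((hint z₂).intervalIntegrable_of_mem_Icc t.2) ?_).trans_eq ?_ <;>
      simp only [dist_eq_norm, Pi.add_apply, add_sub_add_left_eq_sub]
    exact Continuous.intervalIntegrable (by fun_prop) _ _
  obtain ⟨z, hz⟩ := exists_isFixedPt_of_dist_iterate_le
    (dist_iterate_le_of_dist_le_mul_integral hT hΦ)
    (FloorSemiring.tendsto_pow_div_factorial_atTop (K * T))
  refine ⟨y + IccExtend hT z, hcadlag z, fun t ht => ?_⟩
  rw [Pi.add_apply, IccExtend_of_mem hT z ht, ← congrArg (· ⟨t, ht⟩) hz.eq]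
  rfl

end Volterra

section Euclidean

variable {ι : Type*} [Fintype ι]

theorem EuclideanSpace.dist_eq_sqrt_sum_sq (x y : EuclideanSpace ℝ ι) :
    dist x y = √(∑ i, (x i - y i) ^ 2) := by
  simp [EuclideanSpace.dist_eq, Real.dist_eq, sq_abs]

theorem EuclideanSpace.norm_eq_sqrt_sum_sq (x : EuclideanSpace ℝ ι) :
    ‖x‖ = √(∑ i, x i ^ 2) := by
  simp [EuclideanSpace.norm_eq, sq_abs]

theorem EuclideanSpace.lipschitzWith_toLp_comp_ofLp {f : (ι → ℝ) → ι → ℝ} {K : ℝ≥0}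
    (hf : ∀ a b, √(∑ i, (f a i - f b i) ^ 2) ≤ K * √(∑ i, (a i - b i) ^ 2)) :
    LipschitzWith K fun a : EuclideanSpace ℝ ι => WithLp.toLp 2 (f a.ofLp) :=
  LipschitzWith.of_dist_le_mul fun a b => by
    simpa only [EuclideanSpace.dist_eq_sqrt_sum_sq] using hf a.ofLp b.ofLp

theorem EuclideanSpace.intervalIntegral_apply {f : ℝ → EuclideanSpace ℝ ι} {a b : ℝ}
    (hf : IntervalIntegrable f volume a b) (i : ι) :
    (∫ s in a..b, f s) i = ∫ s in a..b, f s i :=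
  ((EuclideanSpace.proj i).intervalIntegral_comp_comm hf).symm

theorem EuclideanSpace.forall_apply_eq_add_integral_iff {T : ℝ} {x y F : ℝ → ι → ℝ}
    (hF : IntegrableOn (fun s => (WithLp.toLp 2 (F s) : EuclideanSpace ℝ ι)) (Icc 0 T)) :
    (∀ t ∈ Icc 0 T, ∀ i, x t i = y t i + ∫ s in (0:ℝ)..t, F s i) ↔
      ∀ t ∈ Icc 0 T, (WithLp.toLp 2 (x t) : EuclideanSpace ℝ ι) =
        WithLp.toLp 2 (y t) + ∫ s in (0:ℝ)..t, WithLp.toLp 2 (F s) := by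
  refine forall₂_congr fun t ht => ?_
  simp [PiLp.ext_iff, EuclideanSpace.intervalIntegral_apply (hF.intervalIntegrable_of_mem_Icc ht)]

end Euclidean

/-- continuity of the controlled integral map: if h is Lipschitz in each
coordinate, then for càdlàg y and bounded measurable u there is a unique càdlàg
solution x of x(t) = y(t) + ∫_0^t h(x(s),u(s))ds on [0,T], and the solution map is
Lipschitz in y: sup_{t≤T}|x₁(t) − x₂(t)| ≤ e^{KT}·sup_{t≤T}|y₁(t) − y₂(t)|. -/
theorem stmt16 (d : ℕ) (T K : ℝ) (hT : 0 < T) (hK : 0 < K)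
    (h : (Fin d → ℝ) → (Fin d → ℝ) → Fin d → ℝ)
    (hLip1 : ∀ u x y, Real.sqrt (∑ i, (h x u i - h y u i) ^ 2) ≤
      K * Real.sqrt (∑ i, (x i - y i) ^ 2))
    (hLip2 : ∀ x u v, Real.sqrt (∑ i, (h x u i - h x v i) ^ 2) ≤
      K * Real.sqrt (∑ i, (u i - v i) ^ 2))
    (y : ℝ → Fin d → ℝ) (hy : CadlagOn y T)
    (u : ℝ → Fin d → ℝ) (humeas : Measurable u)
    (hubdd : ∃ Cu : ℝ, ∀ s, Real.sqrt (∑ i, (u s i) ^ 2) ≤ Cu) :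
    (∃ x : ℝ → Fin d → ℝ, CadlagOn x T ∧
      (∀ t ∈ Set.Icc (0:ℝ) T, ∀ i, x t i = y t i + ∫ s in (0:ℝ)..t, h (x s) (u s) i) ∧
      ∀ x' : ℝ → Fin d → ℝ, CadlagOn x' T →
        (∀ t ∈ Set.Icc (0:ℝ) T, ∀ i, x' t i = y t i + ∫ s in (0:ℝ)..t, h (x' s) (u s) i) →
        ∀ t ∈ Set.Icc (0:ℝ) T, x' t = x t) ∧
    (∀ y₁ y₂ x₁ x₂ : ℝ → Fin d → ℝ, CadlagOn x₁ T → CadlagOn x₂ T →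
      (∀ t ∈ Set.Icc (0:ℝ) T, ∀ i, x₁ t i = y₁ t i + ∫ s in (0:ℝ)..t, h (x₁ s) (u s) i) →
      (∀ t ∈ Set.Icc (0:ℝ) T, ∀ i, x₂ t i = y₂ t i + ∫ s in (0:ℝ)..t, h (x₂ s) (u s) i) →
      ∀ M : ℝ, (∀ t ∈ Set.Icc (0:ℝ) T, Real.sqrt (∑ i, (y₁ t i - y₂ t i) ^ 2) ≤ M) →
        ∀ t ∈ Set.Icc (0:ℝ) T,
          Real.sqrt (∑ i, (x₁ t i - x₂ t i) ^ 2) ≤ Real.exp (K * T) * M) := by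
  obtain ⟨Cu, hCu⟩ := hubdd
  let K' : ℝ≥0 := ⟨K, hK.le⟩
  let H (a w : EuclideanSpace ℝ (Fin d)) : EuclideanSpace ℝ (Fin d) :=
    WithLp.toLp 2 (h a.ofLp w.ofLp)
  let g (s : ℝ) (a : EuclideanSpace ℝ (Fin d)) := H a (WithLp.toLp 2 (u s))
  have hH₁ (w) : LipschitzWith K' (H · w) :=
    EuclideanSpace.lipschitzWith_toLp_comp_ofLp (f := (h · w.ofLp)) (hLip1 w.ofLp)
  have hH₂ (a) : LipschitzWith K' (H a) :=
    EuclideanSpace.lipschitzWith_toLp_comp_ofLp (f := h a.ofLp) (hLip2 a.ofLp)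
  have hgx (x : ℝ → EuclideanSpace ℝ (Fin d)) (hx : CadlagOn x T) :
      IntegrableOn (fun s => g s (x s)) (Icc 0 T) :=
    hx.integrableOn_comp_lipschitzWith₂ hH₁ hH₂
      ((PiLp.continuous_toLp 2 _).measurable.comp humeas).aestronglyMeasurable
      fun s _ => (EuclideanSpace.norm_eq_sqrt_sum_sq _).trans_le (hCu s)
  have htoLp {x : ℝ → Fin d → ℝ} (hx : CadlagOn x T) : CadlagOn (WithLp.toLp 2 ∘ x) T :=
    (PiLp.continuous_toLp 2 _).comp_cadlagOn hx
  have hsol {x y : ℝ → Fin d → ℝ} (hx : CadlagOn x T) :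
      (∀ t ∈ Icc 0 T, ∀ i, x t i = y t i + ∫ s in (0:ℝ)..t, h (x s) (u s) i) ↔
        IsIntegralSolution g (WithLp.toLp 2 ∘ y) T (WithLp.toLp 2 ∘ x) :=
    EuclideanSpace.forall_apply_eq_add_integral_iff (hgx _ (htoLp hx))
  obtain ⟨x, hx, hxsol⟩ := exists_cadlagOn_isIntegralSolution hT.le (fun _ => hH₁ _) hgx (htoLp hy)
  have hx' : CadlagOn (WithLp.ofLp ∘ x) T := (PiLp.continuous_ofLp 2 _).comp_cadlagOn hx
  refine ⟨⟨WithLp.ofLp ∘ x, hx', (hsol hx').2 hxsol, fun x' hx'c hx'sol t ht => ?_⟩,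
    fun y₁ y₂ x₁ x₂ hx₁ hx₂ h₁ h₂ M hM t ht => ?_⟩
  · exact congrArg WithLp.ofLp (((hsol hx'c).1 hx'sol).eqOn (fun _ => hH₁ _) hxsol (htoLp hx'c) hx
      (hgx _ (htoLp hx'c)) (hgx _ hx) ht)
  · have hM₀ : 0 ≤ M := (Real.sqrt_nonneg _).trans (hM 0 ⟨le_rfl, hT.le⟩)
    have hstab := ((hsol hx₁).1 h₁).dist_le (fun _ => hH₁ _) ((hsol hx₂).1 h₂) (htoLp hx₁) (htoLp hx₂)
      (hgx _ (htoLp hx₁)) (hgx _ (htoLp hx₂))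
      (fun s hs => by simpa [EuclideanSpace.dist_eq_sqrt_sum_sq] using hM s hs) t ht
    rw [EuclideanSpace.dist_eq_sqrt_sum_sq] at hstab
    calc √(∑ i, (x₁ t i - x₂ t i) ^ 2) ≤ M * exp (K * t) := hstab
      _ ≤ exp (K * T) * M := by rw [mul_comm]; gcongr; exact ht.2
end
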